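/- Let G be a 3-edge-connected graph with DFS tree T, let v be an ancestor of u in T (u,v ≠ r), and let e be a back-edge. Then {(u,p(u)), (v,p(v)), e} is a 3-edge cut of G if and only if either B(v) = B(u) ⊔ {e} or B(u) = B(v) ⊔ {e} (disjoint unions). -/

import Mathlib

variable {V E : Type}

/-- Reachability in the multigraph with edge-endpoint map `ends`,
avoiding (i.e. after deleting) the edges in `S`. -/
def Reach (ends : E → V × V) (S : Set E) : V → V → Prop :=
  Relation.ReflTransGen (fun a b => ∃ e, e ∉ S ∧ (ends e = (a, b) ∨ ends e = (b, a)))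

/-- The multigraph is connected. -/
def Connected (ends : E → V × V) : Prop := ∀ u v : V, Reach ends ∅ u v

/-- `u` and `v` are `k`-edge-connected: no set of at most `k - 1` edges separates them. -/
def KConn (ends : E → V × V) (k : ℕ) (u v : V) : Prop :=
  ∀ S : Finset E, S.card ≤ k - 1 → Reach ends (↑S) u v

/-- The multigraph is `k`-edge-connected: no edge cut of size less than `k`. -/
def GraphKConn (ends : E → V × V) (k : ℕ) : Prop :=
  ∀ S : Finset E, S.card < k → ∀ u v : V, Reach ends (↑S) u v

/-- `S` is an edge cut: removing it disconnects the graph. -/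
def IsCutSet (ends : E → V × V) (S : Set E) : Prop :=
  ∃ u v : V, ¬ Reach ends S u v

/-- A (candidate) DFS tree on the multigraph `ends : E → V × V`: a root, a parent
function, a choice of a tree edge for each non-root vertex, and a preorder numbering. -/
structure DFSTree (V E : Type) where
  ends : E → V × V
  root : V
  parent : V → V
  treeEdge : V → E
  pre : V → ℕ

namespace DFSTree

variable (t : DFSTree V E)

/-- `t.Anc a b` : `a` is an ancestor of `b` (every vertex is an ancestor of itself). -/
def Anc (a b : V) : Prop :=
  Relation.ReflTransGen (fun x y => x ≠ t.root ∧ y = t.parent x) b a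

/-- `a` is a proper ancestor of `b`. -/
def ProperAnc (a b : V) : Prop := t.Anc a b ∧ a ≠ b

def IsTreeEdge (e : E) : Prop := ∃ v, v ≠ t.root ∧ e = t.treeEdge v

/-- The set `B(v)`: back-edges `(x, y)` with `x` a descendant of `v` and `y` a
proper ancestor of `v`. -/
def B (v : V) : Set E :=
  {e | ¬ t.IsTreeEdge e ∧ t.Anc v (t.ends e).1 ∧ t.ProperAnc (t.ends e).2 v}

/-- `m` is the nearest common ancestor of the set `S` of vertices. -/
def IsNCA (S : Set V) (m : V) : Prop :=
  (∀ x ∈ S, t.Anc m x) ∧ ∀ m' : V, (∀ x ∈ S, t.Anc m' x) → t.Anc m' m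

/-- `m = M(v)`: the nearest common ancestor of all lower ends of back-edges in `B(v)`. -/
def IsM (v m : V) : Prop := t.IsNCA {x | ∃ e ∈ t.B v, (t.ends e).1 = x} m

/-- `h = high(v)`: the highest (in preorder) upper end of a back-edge in `B(v)`. -/
def IsHigh (v h : V) : Prop :=
  (∃ e ∈ t.B v, (t.ends e).2 = h) ∧ ∀ e ∈ t.B v, t.pre (t.ends e).2 ≤ t.pre h

/-- `l = low(v)`: the lowest (in preorder) upper end of a back-edge in `B(v)`. -/
def IsLow (v l : V) : Prop :=
  (∃ e ∈ t.B v, (t.ends e).2 = l) ∧ ∀ e ∈ t.B v, t.pre l ≤ t.pre (t.ends e).2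

/-- `v` and `w` have the same `M`-value. -/
def SameM (v w : V) : Prop := ∃ m, t.IsM v m ∧ t.IsM w m

/-- `n = nextM(v)`: the greatest vertex smaller than `v` with the same `M`-value. -/
def IsNextM (v n : V) : Prop :=
  t.pre n < t.pre v ∧ t.SameM v n ∧
    ∀ z, t.pre z < t.pre v → t.SameM v z → t.pre z ≤ t.pre n

/-- `l = lastM(v)`: the smallest vertex with the same `M`-value as `v`. -/
def IsLastM (v l : V) : Prop :=
  t.SameM v l ∧ ∀ z, t.SameM v z → t.pre l ≤ t.pre z

/-- `t` really is a DFS spanning tree of the connected multigraph `ends`. -/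
structure IsDFS : Prop where
  conn : Connected t.ends
  parent_root : t.parent t.root = t.root
  tree_ends : ∀ v, v ≠ t.root → t.ends (t.treeEdge v) = (v, t.parent v)
  treeEdge_inj : ∀ v w, v ≠ t.root → w ≠ t.root → t.treeEdge v = t.treeEdge w → v = w
  back : ∀ e, ¬ t.IsTreeEdge e → t.Anc (t.ends e).2 (t.ends e).1
  pre_inj : Function.Injective t.pre
  pre_mono : ∀ a b, t.Anc a b → t.pre a ≤ t.pre b
  pre_interval : ∀ a b : V,
    t.pre a ≤ t.pre b → t.pre b < t.pre a + {x | t.Anc a x}.ncard → t.Anc a b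

end DFSTree

/-!
Deleting `S = {(u,p(u)), (v,p(v)), e}` splits `T` into three connected pieces: the subtree of
`u`, the subtree of `v` without that of `u`, and the rest. Apart from `e`, the edges joining these
pieces are the back-edges of `B(u) \ B(v)`, `B(u) ∩ B(v)` and `B(v) \ B(u)` respectively, so
`S` is a cut iff two of these three sets lie in `{e}`. By 3-edge-connectivity neither `B(u)` nor
`B(v)` lies in `{e}` (else two edges would cut off a subtree) and `B(u) ≠ B(v)` (else the two tree
edges would cut off the middle piece); this leaves exactly the two disjoint-union cases.
-/

open Relation

section Reach

variable {ends : E → V × V} {S : Set E}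

theorem Reach.symm {a b : V} (h : Reach ends S a b) : Reach ends S b a := by
  induction h with
  | refl => exact ReflTransGen.refl
  | tail _ hstep ih =>
    obtain ⟨f, hf, hends⟩ := hstep
    exact ReflTransGen.head ⟨f, hf, hends.symm⟩ ih

theorem Reach.trans {a b c : V} (hab : Reach ends S a b) (hbc : Reach ends S b c) :
    Reach ends S a c :=
  ReflTransGen.trans hab hbc

theorem reach_ends {f : E} (hf : f ∉ S) : Reach ends S (ends f).1 (ends f).2 :=
  ReflTransGen.single ⟨f, hf, Or.inl rfl⟩

theorem Reach.mem_iff_mem {W : Set V} (hW : ∀ f ∉ S, (ends f).1 ∈ W ↔ (ends f).2 ∈ W)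
    {a b : V} (h : Reach ends S a b) : a ∈ W ↔ b ∈ W := by
  induction h with
  | refl => rfl
  | tail _ hstep ih =>
    obtain ⟨f, hf, hends | hends⟩ := hstep <;> have hfW := hW f hf <;> rw [hends] at hfW
    exacts [ih.trans hfW, ih.trans hfW.symm]

theorem isCutSet_of_mem_of_notMem {W : Set V} (hW : ∀ f ∉ S, (ends f).1 ∈ W ↔ (ends f).2 ∈ W)
    {a b : V} (ha : a ∈ W) (hb : b ∉ W) : IsCutSet ends S :=
  ⟨a, b, fun h => hb ((h.mem_iff_mem hW).1 ha)⟩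

theorem not_isCutSet_of_cover {p q r c : V}
    (hcover : ∀ x, Reach ends S x p ∨ Reach ends S x q ∨ Reach ends S x r)
    (hp : Reach ends S p c) (hq : Reach ends S q c) (hr : Reach ends S r c) :
    ¬ IsCutSet ends S := by
  rintro ⟨a, b, hab⟩
  have hc : ∀ x, Reach ends S x c := fun x => by
    rcases hcover x with h | h | h
    exacts [h.trans hp, h.trans hq, h.trans hr]
  exact hab ((hc a).trans (hc b).symm)

end Reach

theorem GraphKConn.not_isCutSet_pair {ends : E → V × V} (h : GraphKConn ends 3) (a b : E) :
    ¬ IsCutSet ends {a, b} := by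
  classical
  rintro ⟨x, y, hxy⟩
  have := h {a, b} (Finset.card_le_two.trans_lt (by norm_num)) x y
  simp only [Finset.coe_insert, Finset.coe_singleton] at this
  exact hxy this

theorem Set.eq_insert_or_eq_insert_of_diff_subset_singleton {α : Type*} {P Q : Set α} {e : α}
    (hPQ : P \ Q ⊆ {e}) (hQP : Q \ P ⊆ {e}) (hne : P ≠ Q) :
    (Q = insert e P ∧ e ∉ P) ∨ (P = insert e Q ∧ e ∉ Q) := by
  have h1 : ∀ f, f ∈ P → f ∉ Q → f = e := fun f h h' => hPQ ⟨h, h'⟩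
  have h2 : ∀ f, f ∈ Q → f ∉ P → f = e := fun f h h' => hQP ⟨h, h'⟩
  by_cases heP : e ∈ P <;> by_cases heQ : e ∈ Q
  · exact absurd (Set.ext fun f => by grind) hne
  · exact Or.inr ⟨Set.ext fun f => by grind, heQ⟩
  · exact Or.inl ⟨Set.ext fun f => by grind, heP⟩
  · exact absurd (Set.ext fun f => by grind) hne

namespace DFSTree

variable {t : DFSTree V E}

theorem anc_refl (t : DFSTree V E) (a : V) : t.Anc a a := ReflTransGen.refl

theorem Anc.trans {a b c : V} (hab : t.Anc a b) (hbc : t.Anc b c) : t.Anc a c :=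
  ReflTransGen.trans hbc hab

theorem anc_parent {a : V} (ha : a ≠ t.root) : t.Anc (t.parent a) a :=
  ReflTransGen.single ⟨ha, rfl⟩

theorem Anc.anc_parent {a b : V} (h : t.Anc a b) (hne : b ≠ a) : t.Anc a (t.parent b) := by
  rcases h.cases_head with rfl | ⟨c, ⟨-, rfl⟩, hc⟩
  exacts [absurd rfl hne, hc]

theorem eq_root_of_anc_root {a : V} (h : t.Anc a t.root) : a = t.root := by
  rcases h.cases_head with h | ⟨c, ⟨hroot, -⟩, -⟩
  exacts [h.symm, absurd rfl hroot]

theorem anc_total {a b c : V} (hac : t.Anc a c) (hbc : t.Anc b c) : t.Anc a b ∨ t.Anc b a :=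
  (ReflTransGen.total_of_right_unique (fun _ _ _ h h' => h.2.trans h'.2.symm) hac hbc).symm

namespace IsDFS

theorem anc_antisymm (ht : t.IsDFS) {a b : V} (hab : t.Anc a b) (hba : t.Anc b a) : a = b :=
  ht.pre_inj (le_antisymm (ht.pre_mono a b hab) (ht.pre_mono b a hba))

theorem anc_treeEdge_iff (ht : t.IsDFS) {w z : V} (hz : z ≠ t.root) (hzw : z ≠ w) :
    t.Anc w (t.ends (t.treeEdge z)).1 ↔ t.Anc w (t.ends (t.treeEdge z)).2 := by
  rw [ht.tree_ends z hz]
  exact ⟨fun h => h.anc_parent hzw, fun h => h.trans (anc_parent hz)⟩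

theorem mem_B_iff (ht : t.IsDFS) {f : E} (hf : ¬ t.IsTreeEdge f) {w : V} :
    f ∈ t.B w ↔ t.Anc w (t.ends f).1 ∧ ¬ t.Anc w (t.ends f).2 := by
  constructor
  · rintro ⟨-, hx, hy, hyw⟩
    exact ⟨hx, fun h => hyw (ht.anc_antisymm hy h)⟩
  · rintro ⟨hx, hy⟩
    refine ⟨hf, hx, (anc_total (ht.back f hf) hx).resolve_right hy, ?_⟩
    rintro rfl
    exact hy (anc_refl t _)

theorem anc_fst_iff_anc_snd_of_not_isTreeEdge (ht : t.IsDFS) {f : E} (hf : ¬ t.IsTreeEdge f)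
    {w : V} (hB : f ∉ t.B w) : t.Anc w (t.ends f).1 ↔ t.Anc w (t.ends f).2 :=
  ⟨fun hx => by_contra fun hy => hB ((ht.mem_B_iff hf).2 ⟨hx, hy⟩),
    fun hy => hy.trans (ht.back f hf)⟩

theorem anc_fst_iff_anc_snd (ht : t.IsDFS) {f : E} {w : V} (hfw : f ≠ t.treeEdge w)
    (hB : f ∉ t.B w) : t.Anc w (t.ends f).1 ↔ t.Anc w (t.ends f).2 := by
  by_cases hf : t.IsTreeEdge f
  · obtain ⟨z, hz, rfl⟩ := hf
    exact ht.anc_treeEdge_iff hz fun h => hfw (h ▸ rfl)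
  · exact ht.anc_fst_iff_anc_snd_of_not_isTreeEdge hf hB

theorem root_anc (ht : t.IsDFS) (x : V) : t.Anc t.root x := by
  have hW : ∀ f ∉ (∅ : Set E), t.Anc t.root (t.ends f).1 ↔ t.Anc t.root (t.ends f).2 := by
    intro f _
    by_cases hf : t.IsTreeEdge f
    · obtain ⟨z, hz, rfl⟩ := hf
      exact ht.anc_treeEdge_iff hz hz
    · exact ht.anc_fst_iff_anc_snd_of_not_isTreeEdge hf
        fun h => h.2.2.2 (eq_root_of_anc_root h.2.2.1)
  exact ((ht.conn t.root x).mem_iff_mem (W := {y | t.Anc t.root y}) hW).1 (anc_refl t _)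

theorem reach_of_anc (ht : t.IsDFS) {S : Set E} {w x : V} (hwx : t.Anc w x)
    (hS : ∀ y, t.Anc w y → t.Anc y x → y ≠ w → t.treeEdge y ∉ S) : Reach t.ends S x w := by
  induction hwx using ReflTransGen.head_induction_on with
  | refl => exact ReflTransGen.refl
  | @head a c hac hcw ih =>
    by_cases haw : a = w
    · subst haw
      exact ReflTransGen.refl
    have hedge :=
      reach_ends (ends := t.ends) (hS a (ReflTransGen.head hac hcw) (anc_refl t a) haw)
    rw [ht.tree_ends a hac.1, ← hac.2] at hedge
    exact hedge.trans (ih fun y hwy hyc => hS y hwy (hyc.trans (hac.2 ▸ anc_parent hac.1)))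

theorem isCutSet_of_B_subset (ht : t.IsDFS) {S : Set E} {w : V} (hw : w ≠ t.root)
    (htw : t.treeEdge w ∈ S) (hB : t.B w ⊆ S) : IsCutSet t.ends S :=
  isCutSet_of_mem_of_notMem (W := {x | t.Anc w x})
    (fun _ hf => ht.anc_fst_iff_anc_snd (ne_of_mem_of_not_mem htw hf).symm fun h => hf (hB h))
    (anc_refl t w) fun h => hw (eq_root_of_anc_root h)

theorem isCutSet_of_mem_B_iff (ht : t.IsDFS) {S : Set E} {u v : V} (huv : ¬ t.Anc u v)
    (hv : v ≠ t.root) (htu : t.treeEdge u ∈ S) (htv : t.treeEdge v ∈ S)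
    (hB : ∀ f ∉ S, f ∈ t.B u ↔ f ∈ t.B v) : IsCutSet t.ends S := by
  refine isCutSet_of_mem_of_notMem (W := {x | t.Anc v x ∧ ¬ t.Anc u x}) (fun f hf => ?_)
    ⟨anc_refl t v, huv⟩ fun h => hv (eq_root_of_anc_root h.1)
  by_cases hfu : f ∈ t.B u
  · have hfv := (ht.mem_B_iff hfu.1).1 ((hB f hf).1 hfu)
    rw [ht.mem_B_iff hfu.1] at hfu
    exact iff_of_false (fun h => h.2 hfu.1) fun h => hfv.2 h.1
  · have hfv : f ∉ t.B v := mt (hB f hf).2 hfu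
    exact and_congr (ht.anc_fst_iff_anc_snd (ne_of_mem_of_not_mem htv hf).symm hfv)
      (not_congr (ht.anc_fst_iff_anc_snd (ne_of_mem_of_not_mem htu hf).symm hfu))

section CutSet

-- In the names below, `lower` refers to `u` and `upper` to its ancestor `v`.
variable {u v : V} {e : E}

local notation "S" => ({t.treeEdge u, t.treeEdge v, e} : Set E)

theorem treeEdge_notMem_cutSet (ht : t.IsDFS) {y : V} (hu : u ≠ t.root)
    (hv : v ≠ t.root) (hback : ¬ t.IsTreeEdge e) (hy : y ≠ t.root) (hyu : y ≠ u) (hyv : y ≠ v) :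
    t.treeEdge y ∉ S := by
  simp only [Set.mem_insert_iff, Set.mem_singleton_iff, not_or]
  exact ⟨fun h => hyu (ht.treeEdge_inj y u hy hu h), fun h => hyv (ht.treeEdge_inj y v hy hv h),
    fun h => hback ⟨y, hy, h.symm⟩⟩

theorem reach_of_anc_lower (ht : t.IsDFS) (hu : u ≠ t.root) (hv : v ≠ t.root)
    (hback : ¬ t.IsTreeEdge e) (hanc : t.Anc v u) {x : V} (hux : t.Anc u x) :
    Reach t.ends S x u :=
  ht.reach_of_anc hux fun y huy _ hyu => ht.treeEdge_notMem_cutSet hu hv hback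
    (by rintro rfl; exact hu (eq_root_of_anc_root huy)) hyu
    (by rintro rfl; exact hyu (ht.anc_antisymm hanc huy))

theorem reach_of_anc_upper (ht : t.IsDFS) (hu : u ≠ t.root) (hv : v ≠ t.root)
    (hback : ¬ t.IsTreeEdge e) {x : V} (hvx : t.Anc v x) (hux : ¬ t.Anc u x) :
    Reach t.ends S x v :=
  ht.reach_of_anc hvx fun y hvy hyx hyv => ht.treeEdge_notMem_cutSet hu hv hback
    (by rintro rfl; exact hv (eq_root_of_anc_root hvy)) (by rintro rfl; exact hux hyx) hyv

theorem reach_root_of_not_anc_upper (ht : t.IsDFS) (hu : u ≠ t.root) (hv : v ≠ t.root)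
    (hback : ¬ t.IsTreeEdge e) (hanc : t.Anc v u) {x : V} (hvx : ¬ t.Anc v x) :
    Reach t.ends S x t.root :=
  ht.reach_of_anc (ht.root_anc x) fun y _ hyx hyr => ht.treeEdge_notMem_cutSet hu hv hback hyr
    (by rintro rfl; exact hvx (hanc.trans hyx)) (by rintro rfl; exact hvx hyx)

theorem reach_cover (ht : t.IsDFS) (hu : u ≠ t.root) (hv : v ≠ t.root)
    (hback : ¬ t.IsTreeEdge e) (hanc : t.Anc v u) (x : V) :
    Reach t.ends S x u ∨ Reach t.ends S x v ∨ Reach t.ends S x t.root := by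
  by_cases hux : t.Anc u x
  · exact Or.inl (ht.reach_of_anc_lower hu hv hback hanc hux)
  by_cases hvx : t.Anc v x
  · exact Or.inr (Or.inl (ht.reach_of_anc_upper hu hv hback hvx hux))
  · exact Or.inr (Or.inr (ht.reach_root_of_not_anc_upper hu hv hback hanc hvx))

theorem notMem_cutSet_of_not_isTreeEdge {f : E} (hu : u ≠ t.root) (hv : v ≠ t.root)
    (hf : ¬ t.IsTreeEdge f) (hfe : f ≠ e) : f ∉ S := by
  simp only [Set.mem_insert_iff, Set.mem_singleton_iff, not_or]
  exact ⟨fun h => hf ⟨u, hu, h⟩, fun h => hf ⟨v, hv, h⟩, hfe⟩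

theorem reach_lower_upper_of_mem_B_diff (ht : t.IsDFS) (hu : u ≠ t.root) (hv : v ≠ t.root)
    (hback : ¬ t.IsTreeEdge e) (hanc : t.Anc v u) {f : E} (hfu : f ∈ t.B u) (hfv : f ∉ t.B v)
    (hfe : f ≠ e) : Reach t.ends S u v := by
  have hf := hfu.1
  rw [ht.mem_B_iff hf] at hfu hfv
  have hvy : t.Anc v (t.ends f).2 := by_contra fun h => hfv ⟨hanc.trans hfu.1, h⟩
  exact (ht.reach_of_anc_lower hu hv hback hanc hfu.1).symm.trans
    ((reach_ends (notMem_cutSet_of_not_isTreeEdge hu hv hf hfe)).trans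
      (ht.reach_of_anc_upper hu hv hback hvy hfu.2))

theorem reach_lower_root_of_mem_B_inter (ht : t.IsDFS) (hu : u ≠ t.root) (hv : v ≠ t.root)
    (hback : ¬ t.IsTreeEdge e) (hanc : t.Anc v u) {f : E} (hfu : f ∈ t.B u) (hfv : f ∈ t.B v)
    (hfe : f ≠ e) : Reach t.ends S u t.root := by
  have hf := hfu.1
  rw [ht.mem_B_iff hf] at hfu hfv
  exact (ht.reach_of_anc_lower hu hv hback hanc hfu.1).symm.trans
    ((reach_ends (notMem_cutSet_of_not_isTreeEdge hu hv hf hfe)).trans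
      (ht.reach_root_of_not_anc_upper hu hv hback hanc hfv.2))

theorem reach_upper_root_of_mem_B_diff (ht : t.IsDFS) (hu : u ≠ t.root) (hv : v ≠ t.root)
    (hback : ¬ t.IsTreeEdge e) (hanc : t.Anc v u) {f : E} (hfv : f ∈ t.B v) (hfu : f ∉ t.B u)
    (hfe : f ≠ e) : Reach t.ends S v t.root := by
  have hf := hfv.1
  rw [ht.mem_B_iff hf] at hfu hfv
  have hux : ¬ t.Anc u (t.ends f).1 := fun h =>
    hfv.2 (hanc.trans (by_contra fun hy => hfu ⟨h, hy⟩))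
  exact (ht.reach_of_anc_upper hu hv hback hfv.1 hux).symm.trans
    ((reach_ends (notMem_cutSet_of_not_isTreeEdge hu hv hf hfe)).trans
      (ht.reach_root_of_not_anc_upper hu hv hback hanc hfv.2))

theorem B_eq_insert_of_isCutSet (ht : t.IsDFS) (h3 : GraphKConn t.ends 3) (hu : u ≠ t.root)
    (hv : v ≠ t.root) (hback : ¬ t.IsTreeEdge e) (hanc : t.Anc v u) (hcut : IsCutSet t.ends S) :
    (t.B v = insert e (t.B u) ∧ e ∉ t.B u) ∨ (t.B u = insert e (t.B v) ∧ e ∉ t.B v) := by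
  have hcover := ht.reach_cover hu hv hback hanc
  have hB_not_subset : ∀ w, w ≠ t.root → ¬ t.B w ⊆ {e} := fun w hw hsub =>
    h3.not_isCutSet_pair _ _
      (ht.isCutSet_of_B_subset hw (Set.mem_insert _ _) (hsub.trans (Set.subset_insert _ _)))
  by_cases hinter : t.B u ∩ t.B v ⊆ {e}
  · obtain ⟨f, hfu, hfe⟩ := Set.not_subset.1 (hB_not_subset u hu)
    obtain ⟨g, hgv, hge⟩ := Set.not_subset.1 (hB_not_subset v hv)
    have hvr := ht.reach_upper_root_of_mem_B_diff hu hv hback hanc hgv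
      (fun hgu => hge (hinter ⟨hgu, hgv⟩)) hge
    have huv := ht.reach_lower_upper_of_mem_B_diff hu hv hback hanc hfu
      (fun hfv => hfe (hinter ⟨hfu, hfv⟩)) hfe
    exact absurd hcut (not_isCutSet_of_cover hcover (huv.trans hvr) hvr ReflTransGen.refl)
  obtain ⟨f, ⟨hfu, hfv⟩, hfe⟩ := Set.not_subset.1 hinter
  have hur := ht.reach_lower_root_of_mem_B_inter hu hv hback hanc hfu hfv hfe
  have hdiff_uv : t.B u \ t.B v ⊆ {e} := fun g ⟨hgu, hgv⟩ => by_contra fun hge =>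
    not_isCutSet_of_cover hcover hur
      ((ht.reach_lower_upper_of_mem_B_diff hu hv hback hanc hgu hgv hge).symm.trans hur)
      ReflTransGen.refl hcut
  have hdiff_vu : t.B v \ t.B u ⊆ {e} := fun g ⟨hgv, hgu⟩ => by_contra fun hge =>
    not_isCutSet_of_cover hcover hur
      (ht.reach_upper_root_of_mem_B_diff hu hv hback hanc hgv hgu hge) ReflTransGen.refl hcut
  have hvu : ¬ t.Anc u v := fun h => by
    obtain rfl := ht.anc_antisymm h hanc
    exact not_isCutSet_of_cover hcover hur hur ReflTransGen.refl hcut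
  have hne : t.B u ≠ t.B v := fun h => h3.not_isCutSet_pair (t.treeEdge u) (t.treeEdge v)
    (ht.isCutSet_of_mem_B_iff hvu hv (Set.mem_insert _ _) (Set.mem_insert_of_mem _ rfl)
      fun _ _ => by rw [h])
  exact Set.eq_insert_or_eq_insert_of_diff_subset_singleton hdiff_uv hdiff_vu hne

theorem isCutSet_of_B_eq_insert (ht : t.IsDFS) (hv : v ≠ t.root) (hanc : t.Anc v u)
    (hB : (t.B v = insert e (t.B u) ∧ e ∉ t.B u) ∨ (t.B u = insert e (t.B v) ∧ e ∉ t.B v)) :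
    IsCutSet t.ends S := by
  have hne : t.B u ≠ t.B v := by
    rintro heq
    rcases hB with ⟨h, he⟩ | ⟨h, he⟩
    · rw [heq, h] at he
      exact he (Set.mem_insert _ _)
    · rw [← heq, h] at he
      exact he (Set.mem_insert _ _)
  have hvu : ¬ t.Anc u v := fun h => hne (by rw [ht.anc_antisymm h hanc])
  refine ht.isCutSet_of_mem_B_iff hvu hv (by simp) (by simp) fun f hf => ?_
  have hfe : f ≠ e := by rintro rfl; simp at hf
  rcases hB with ⟨h, -⟩ | ⟨h, -⟩ <;> simp [h, hfe]

end CutSet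

end IsDFS

end DFSTree

/-- Let `v` be an ancestor of `u` (both `≠ r`) and `e` a back-edge. Then
`{(u, p(u)), (v, p(v)), e}` is a 3-edge cut iff `B(v) = B(u) ⊔ {e}` or
`B(u) = B(v) ⊔ {e}` (disjoint unions). -/
theorem cut_two_tree_edges_characterization (t : DFSTree V E) (ht : t.IsDFS)
    (h3 : GraphKConn t.ends 3) (u v : V) (e : E)
    (hu : u ≠ t.root) (hv : v ≠ t.root)
    (hanc : t.Anc v u) (hback : ¬ t.IsTreeEdge e) :
    IsCutSet t.ends {t.treeEdge u, t.treeEdge v, e} ↔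
      ((t.B v = insert e (t.B u) ∧ e ∉ t.B u) ∨
        (t.B u = insert e (t.B v) ∧ e ∉ t.B v)) :=
  ⟨ht.B_eq_insert_of_isCutSet h3 hu hv hback hanc, ht.isCutSet_of_B_eq_insert hv hanc⟩
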